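/- arXiv:2501.13301 — 2 statements merged into one kernel-verified Lean document; each statement's English description precedes it below -/
import Mathlib

section
/- Let G, H ∈ ℝ^{N×N} be matrices such that G is invertible and H ≠ 0, and let Ĝ, Ĥ be random matrices in ℝ^{N×N} (defined on a probability space (Ω, P)) such that Ĝ is invertible almost surely. Then for every ε > 0, P(‖G⁻¹H − Ĝ⁻¹Ĥ‖ > ε) ≤ P(‖H − Ĥ‖ > (ε/τ_ε) ‖H‖) + P(‖G − Ĝ‖ > (ε/τ_ε) ‖G⁻¹‖⁻¹), where τ_ε = 2‖G⁻¹‖‖H‖ + ε and ‖·‖ denotes the operator norm of a matrix induced by the Euclidean norm. -/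
open MeasureTheory ProbabilityTheory Matrix

/-- The operator norm of a real square matrix induced by the Euclidean norm. -/
noncomputable def opNorm {N : ℕ} (M : Matrix (Fin N) (Fin N) ℝ) : ℝ :=
  ‖Matrix.toEuclideanCLM (𝕜 := ℝ) M‖

/-!
Write `a = ‖g⁻¹‖`, `c = ‖h‖` and `δ = ε / τ`. The identity `ĝ⁻¹ - g⁻¹ = ĝ⁻¹ (g - ĝ) g⁻¹` gives
`‖ĝ⁻¹‖ (1 - δ) ≤ a` as soon as `‖g - ĝ‖ a ≤ δ`, and, splitting
`g⁻¹ h - ĝ⁻¹ ĥ = g⁻¹ (h - ĥ) - ĝ⁻¹ (g - ĝ) g⁻¹ ĥ`, the error is at most `2 δ a c / (1 - δ)`.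
The choice `τ = 2 a c + ε` makes this bound exactly `ε`. Hence the event
`‖g⁻¹ h - ĝ⁻¹ ĥ‖ > ε` is, up to the null set where `ĝ` is singular, contained in the union of the
two perturbation events, and subadditivity of the measure concludes.
-/

namespace Ring

variable {R : Type*} [NormedRing R] {g ĝ : R}

theorem norm_inverse_mul_one_sub_le (hg : IsUnit g) (hĝ : IsUnit ĝ) {δ : ℝ}
    (hδ : ‖g - ĝ‖ * ‖inverse g‖ ≤ δ) : ‖inverse ĝ‖ * (1 - δ) ≤ ‖inverse g‖ := by
  have hsplit : inverse ĝ = inverse g + inverse ĝ * (g - ĝ) * inverse g := by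
    rw [← inverse_sub_inverse (iff_of_true hĝ hg)]
    abel
  have hbound : ‖inverse ĝ‖ ≤ ‖inverse g‖ + ‖inverse ĝ‖ * δ :=
    calc ‖inverse ĝ‖ ≤ ‖inverse g‖ + ‖inverse ĝ‖ * ‖g - ĝ‖ * ‖inverse g‖ := by
          nth_rewrite 1 [hsplit]
          exact (norm_add_le _ _).trans (add_le_add le_rfl norm_mul₃_le)
      _ ≤ ‖inverse g‖ + ‖inverse ĝ‖ * δ := by
          rw [mul_assoc]
          gcongr
  linarith

theorem norm_inverse_mul_sub_inverse_mul_le (hg : IsUnit g) (hĝ : IsUnit ĝ) {h ĥ : R} {δ : ℝ}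
    (hδ : δ < 1) (hh : ‖h - ĥ‖ ≤ δ * ‖h‖) (hgδ : ‖g - ĝ‖ * ‖inverse g‖ ≤ δ) :
    ‖inverse g * h - inverse ĝ * ĥ‖ ≤ 2 * δ * (‖inverse g‖ * ‖h‖) / (1 - δ) := by
  set a := ‖inverse g‖
  set b := ‖inverse ĝ‖
  have hδ0 : 0 ≤ δ := (by positivity : 0 ≤ ‖g - ĝ‖ * a).trans hgδ
  have hsplit : inverse g * h - inverse ĝ * ĥ =
      inverse g * (h - ĥ) - inverse ĝ * (g - ĝ) * inverse g * ĥ := by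
    rw [← inverse_sub_inverse (iff_of_true hĝ hg)]
    noncomm_ring
  have hĥ : ‖ĥ‖ ≤ (1 + δ) * ‖h‖ := by
    linarith [norm_le_norm_add_norm_sub h ĥ]
  have hb : b * (1 - δ) ≤ a := norm_inverse_mul_one_sub_le hg hĝ hgδ
  have herr : ‖inverse g * h - inverse ĝ * ĥ‖ ≤ a * (δ * ‖h‖) + b * δ * ((1 + δ) * ‖h‖) :=
    calc ‖inverse g * h - inverse ĝ * ĥ‖
        ≤ a * ‖h - ĥ‖ + b * (‖g - ĝ‖ * a) * ‖ĥ‖ := by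
          rw [hsplit]
          refine (norm_sub_le _ _).trans (add_le_add (norm_mul_le _ _) ?_)
          calc ‖inverse ĝ * (g - ĝ) * inverse g * ĥ‖ ≤ b * ‖g - ĝ‖ * a * ‖ĥ‖ := by
                grw [norm_mul_le, norm_mul₃_le]
            _ = b * (‖g - ĝ‖ * a) * ‖ĥ‖ := by ring
      _ ≤ a * (δ * ‖h‖) + b * δ * ((1 + δ) * ‖h‖) := by gcongr
  rw [le_div_iff₀ (by linarith)]
  nlinarith [mul_le_mul_of_nonneg_right hb (by positivity : 0 ≤ δ * (1 + δ) * ‖h‖)]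

theorem norm_inverse_mul_sub_inverse_mul_le_of_le (hg : IsUnit g) (hĝ : IsUnit ĝ) {h ĥ : R}
    (hh0 : h ≠ 0) {ε : ℝ} (hε : 0 < ε)
    (hh : ‖h - ĥ‖ ≤ ε / (2 * ‖inverse g‖ * ‖h‖ + ε) * ‖h‖)
    (hgg : ‖g - ĝ‖ ≤ ε / (2 * ‖inverse g‖ * ‖h‖ + ε) * ‖inverse g‖⁻¹) :
    ‖inverse g * h - inverse ĝ * ĥ‖ ≤ ε := by
  have : Nontrivial R := nontrivial_of_ne h 0 hh0
  have ha : 0 < ‖inverse g‖ := norm_pos_iff.2 hg.ringInverse.ne_zero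
  have hc : 0 < ‖h‖ := norm_pos_iff.2 hh0
  set τ := 2 * ‖inverse g‖ * ‖h‖ + ε
  have hτ : 0 < τ := by positivity
  have hδ : ε / τ < 1 := (div_lt_one hτ).2 (by simp only [τ]; nlinarith)
  have hgδ : ‖g - ĝ‖ * ‖inverse g‖ ≤ ε / τ := by rwa [← le_div_iff₀ ha, div_eq_mul_inv]
  calc ‖inverse g * h - inverse ĝ * ĥ‖
      ≤ 2 * (ε / τ) * (‖inverse g‖ * ‖h‖) / (1 - ε / τ) :=
        norm_inverse_mul_sub_inverse_mul_le hg hĝ hδ hh hgδ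
    _ = ε := by
        rw [one_sub_div hτ.ne', show τ - ε = 2 * (‖inverse g‖ * ‖h‖) by simp only [τ]; ring]
        field_simp

end Ring

theorem MeasureTheory.measure_le_add_of_ae_imp_or {Ω : Type*} [MeasurableSpace Ω] {μ : Measure Ω}
    {p q r : Ω → Prop} (h : ∀ᵐ ω ∂μ, p ω → q ω ∨ r ω) :
    μ {ω | p ω} ≤ μ {ω | q ω} + μ {ω | r ω} :=
  (measure_mono_ae h).trans (measure_union_le _ _)

open scoped Matrix.Norms.L2Operator

theorem perturbation_bound_prob_general
    {N : ℕ}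
    {Ω : Type*} [MeasurableSpace Ω] (P : Measure Ω)
    (G H : Matrix (Fin N) (Fin N) ℝ)
    (hG : IsUnit G) (hH : H ≠ 0)
    (Ghat Hhat : Ω → Matrix (Fin N) (Fin N) ℝ)
    (hGhat : ∀ᵐ ω ∂P, IsUnit (Ghat ω))
    (ε : ℝ) (hε : 0 < ε)
    (τ : ℝ) (hτ : τ = 2 * opNorm G⁻¹ * opNorm H + ε) :
    P {ω | ε < opNorm (G⁻¹ * H - (Ghat ω)⁻¹ * Hhat ω)} ≤
      P {ω | (ε / τ) * opNorm H < opNorm (H - Hhat ω)} +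
      P {ω | (ε / τ) * (opNorm G⁻¹)⁻¹ < opNorm (G - Ghat ω)} := by
  subst hτ
  refine measure_le_add_of_ae_imp_or (hGhat.mono fun ω hĜ hlarge => ?_)
  by_contra! hsmall
  simp only [opNorm, ← cstar_norm_def, nonsing_inv_eq_ringInverse] at hsmall hlarge
  exact hlarge.not_ge
    (Ring.norm_inverse_mul_sub_inverse_mul_le_of_le hG hĜ hH hε hsmall.1 hsmall.2)

/-- **Lemma 4.4:** probabilistic perturbation bound for the product `G⁻¹ * H`. -/
theorem perturbation_bound_prob
    {N : ℕ} (hN : 0 < N)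
    {Ω : Type*} [MeasurableSpace Ω] (P : Measure Ω) [IsProbabilityMeasure P]
    (G H : Matrix (Fin N) (Fin N) ℝ)
    (hG : IsUnit G) (hH : H ≠ 0)
    (Ghat Hhat : Ω → Matrix (Fin N) (Fin N) ℝ)
    (hGhat : ∀ᵐ ω ∂P, IsUnit (Ghat ω))
    (ε : ℝ) (hε : 0 < ε)
    (τ : ℝ) (hτ : τ = 2 * opNorm G⁻¹ * opNorm H + ε) :
    P {ω | ε < opNorm (G⁻¹ * H - (Ghat ω)⁻¹ * Hhat ω)} ≤
      P {ω | (ε / τ) * opNorm H < opNorm (H - Hhat ω)} +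
      P {ω | (ε / τ) * (opNorm G⁻¹)⁻¹ < opNorm (G - Ghat ω)} :=
  perturbation_bound_prob_general P G H hG hH Ghat Hhat hGhat ε hε τ hτ
end

section
/- Let G, H, Ĝ, Ĥ ∈ ℝ^{N×N} be matrices such that G and Ĝ are invertible and H ≠ 0. Let ε > 0 and set τ_ε = 2‖G⁻¹‖‖H‖ + ε, where ‖·‖ denotes the operator norm of a matrix induced by the Euclidean norm. If ‖G⁻¹H − Ĝ⁻¹Ĥ‖ > ε, then at least one of the following holds: ‖H − Ĥ‖ > (ε/τ_ε) ‖H‖, or ‖G − Ĝ‖ > (ε/τ_ε) ‖G⁻¹‖⁻¹. -/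
open Matrix

/-!
Write `D = G⁻¹H - Ĝ⁻¹Ĥ`. Multiplying by `G` and splitting `Ĝ = G + (Ĝ - G)` gives
`G D = (Ĝ - G) G⁻¹ H + (H - Ĥ) - (Ĝ - G) D`, so `D` is controlled by the two perturbations,
with `D` itself reappearing on the right with the small factor `‖G⁻¹‖ ‖Ĝ - G‖`. If both
perturbations are at most `δ = ε / τ` in relative size, this gives `(1 - δ) ‖D‖ ≤ 2 δ ‖G⁻¹‖ ‖H‖`,
and the choice `τ = 2 ‖G⁻¹‖ ‖H‖ + ε` turns it into `‖D‖ ≤ ε`. Only submultiplicativity of the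
norm is used, so the argument runs in any normed ring, with `Ring.inverse` for `⁻¹`.
-/

open scoped Ring

theorem MulEquiv.map_ringInverse {F M₀ N₀ : Type*} [MonoidWithZero M₀] [MonoidWithZero N₀]
    [EquivLike F M₀ N₀] [MulEquivClass F M₀ N₀] (φ : F) (x : M₀) : φ x⁻¹ʳ = (φ x)⁻¹ʳ := by
  by_cases hx : IsUnit x
  · calc φ x⁻¹ʳ = (φ x)⁻¹ʳ * (φ x * φ x⁻¹ʳ) :=
          (Ring.inverse_mul_cancel_left _ _ ((MulEquiv.isUnit_map φ).mpr hx)).symm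
      _ = (φ x)⁻¹ʳ := by rw [← map_mul, Ring.mul_inverse_cancel x hx, map_one, mul_one]
  · rw [Ring.inverse_non_unit x hx, Ring.inverse_non_unit _ (mt (MulEquiv.isUnit_map φ).mp hx),
      map_zero]

section NormedRing

variable {R : Type*} [NormedRing R] {g ĝ : R}

theorem Ring.inverse_mul_sub_inverse_mul_eq (hg : IsUnit g) (hĝ : IsUnit ĝ) (h ĥ : R) :
    g⁻¹ʳ * h - ĝ⁻¹ʳ * ĥ =
      g⁻¹ʳ * ((ĝ - g) * (g⁻¹ʳ * h) + (h - ĥ) - (ĝ - g) * (g⁻¹ʳ * h - ĝ⁻¹ʳ * ĥ)) := by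
  set D := g⁻¹ʳ * h - ĝ⁻¹ʳ * ĥ with hD
  have hgD : g * D = (ĝ - g) * (g⁻¹ʳ * h) + (h - ĥ) - (ĝ - g) * D := by
    simp only [hD, mul_sub, sub_mul, ← mul_assoc, Ring.mul_inverse_cancel g hg,
      Ring.mul_inverse_cancel ĝ hĝ, one_mul]
    abel
  rw [← hgD, Ring.inverse_mul_cancel_left g D hg]

theorem Ring.norm_inverse_mul_sub_inverse_mul_le_s3 (hg : IsUnit g) (hĝ : IsUnit ĝ) (h ĥ : R) :
    ‖g⁻¹ʳ * h - ĝ⁻¹ʳ * ĥ‖ ≤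
      ‖g⁻¹ʳ‖ * (‖ĝ - g‖ * (‖g⁻¹ʳ‖ * ‖h‖) + ‖h - ĥ‖ + ‖ĝ - g‖ * ‖g⁻¹ʳ * h - ĝ⁻¹ʳ * ĥ‖) := by
  set D := g⁻¹ʳ * h - ĝ⁻¹ʳ * ĥ
  calc ‖D‖ = ‖g⁻¹ʳ * ((ĝ - g) * (g⁻¹ʳ * h) + (h - ĥ) - (ĝ - g) * D)‖ := by
        rw [← Ring.inverse_mul_sub_inverse_mul_eq hg hĝ]
    _ ≤ ‖g⁻¹ʳ‖ * (‖ĝ - g‖ * (‖g⁻¹ʳ‖ * ‖h‖) + ‖h - ĥ‖ + ‖ĝ - g‖ * ‖D‖) := by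
        refine (norm_mul_le _ _).trans (mul_le_mul_of_nonneg_left ?_ (norm_nonneg _))
        refine (norm_sub_le _ _).trans (add_le_add ((norm_add_le _ _).trans ?_) (norm_mul_le _ _))
        gcongr
        exact (norm_mul_le _ _).trans (mul_le_mul_of_nonneg_left (norm_mul_le _ _) (norm_nonneg _))

theorem Ring.norm_inverse_mul_sub_inverse_mul_le_of_le_s3 (hg : IsUnit g) (hĝ : IsUnit ĝ) {h ĥ : R}
    {δ : ℝ} (hδ : 0 ≤ δ) (hh : ‖h - ĥ‖ ≤ δ * ‖h‖) (hgδ : ‖g - ĝ‖ ≤ δ * ‖g⁻¹ʳ‖⁻¹) :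
    (1 - δ) * ‖g⁻¹ʳ * h - ĝ⁻¹ʳ * ĥ‖ ≤ 2 * δ * (‖g⁻¹ʳ‖ * ‖h‖) := by
  have hrel : ‖ĝ - g‖ * ‖g⁻¹ʳ‖ ≤ δ := by
    rw [norm_sub_rev]
    calc ‖g - ĝ‖ * ‖g⁻¹ʳ‖ ≤ δ * (‖g⁻¹ʳ‖⁻¹ * ‖g⁻¹ʳ‖) := by
          rw [← mul_assoc]; gcongr
      _ ≤ δ := mul_le_of_le_one_right hδ (inv_mul_le_one_of_le₀ le_rfl (norm_nonneg _))
  have := Ring.norm_inverse_mul_sub_inverse_mul_le_s3 hg hĝ h ĥ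
  have ha := norm_nonneg g⁻¹ʳ
  nlinarith [mul_le_mul_of_nonneg_right hrel (mul_nonneg ha (norm_nonneg h)),
    mul_le_mul_of_nonneg_left hh ha,
    mul_le_mul_of_nonneg_right hrel (norm_nonneg (g⁻¹ʳ * h - ĝ⁻¹ʳ * ĥ))]

theorem Ring.perturbation_bound {h ĥ : R} (hg : IsUnit g) (hĝ : IsUnit ĝ) (hh : h ≠ 0)
    {ε : ℝ} (hε : 0 < ε) (hfar : ε < ‖g⁻¹ʳ * h - ĝ⁻¹ʳ * ĥ‖) :
    ε / (2 * ‖g⁻¹ʳ‖ * ‖h‖ + ε) * ‖h‖ < ‖h - ĥ‖ ∨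
      ε / (2 * ‖g⁻¹ʳ‖ * ‖h‖ + ε) * ‖g⁻¹ʳ‖⁻¹ < ‖g - ĝ‖ := by
  -- `hfar` forces `R ≠ 0`, hence `g⁻¹ʳ ≠ 0`.
  have : Nontrivial R := nontrivial_of_ne _ 0 (norm_pos_iff.mp (hε.trans hfar))
  have hg_inv : g⁻¹ʳ ≠ 0 := fun h0 ↦ one_ne_zero <| by
    rw [← Ring.inverse_mul_cancel g hg, h0, zero_mul]
  have hpos : 0 < ‖g⁻¹ʳ‖ * ‖h‖ := mul_pos (norm_pos_iff.mpr hg_inv) (norm_pos_iff.mpr hh)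
  set τ := 2 * ‖g⁻¹ʳ‖ * ‖h‖ + ε
  have hτ : 0 < τ := by positivity
  by_contra! hclose
  have hbound := Ring.norm_inverse_mul_sub_inverse_mul_le_of_le_s3 hg hĝ (by positivity)
    hclose.1 hclose.2
  have hτε : 0 < τ - ε := by simp only [τ]; linarith
  refine hfar.not_ge (le_of_mul_le_mul_left ?_ hτε)
  calc (τ - ε) * ‖g⁻¹ʳ * h - ĝ⁻¹ʳ * ĥ‖ = τ * ((1 - ε / τ) * ‖g⁻¹ʳ * h - ĝ⁻¹ʳ * ĥ‖) := by
        field_simp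
    _ ≤ τ * (2 * (ε / τ) * (‖g⁻¹ʳ‖ * ‖h‖)) := by gcongr
    _ = (τ - ε) * ε := by simp only [τ]; field_simp; ring

end NormedRing

theorem perturbation_bound_det_general
    {N : ℕ}
    (G H Ghat Hhat : Matrix (Fin N) (Fin N) ℝ)
    (hG : IsUnit G) (hGhat : IsUnit Ghat) (hH : H ≠ 0)
    (ε : ℝ) (hε : 0 < ε)
    (τ : ℝ) (hτ : τ = 2 * opNorm G⁻¹ * opNorm H + ε)
    (hfar : ε < opNorm (G⁻¹ * H - Ghat⁻¹ * Hhat)) :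
    (ε / τ) * opNorm H < opNorm (H - Hhat) ∨
    (ε / τ) * (opNorm G⁻¹)⁻¹ < opNorm (G - Ghat) := by
  have toCLM_inv (A : Matrix (Fin N) (Fin N) ℝ) :
      toEuclideanCLM (n := Fin N) (𝕜 := ℝ) A⁻¹ = (toEuclideanCLM (n := Fin N) (𝕜 := ℝ) A)⁻¹ʳ := by
    rw [nonsing_inv_eq_ringInverse, MulEquiv.map_ringInverse]
  subst hτ
  simp only [opNorm, map_sub, map_mul, toCLM_inv] at hfar ⊢
  exact Ring.perturbation_bound ((MulEquiv.isUnit_map _).mpr hG)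
    ((MulEquiv.isUnit_map _).mpr hGhat) ((map_ne_zero_iff _ (EquivLike.injective _)).mpr hH)
    hε hfar

/-- Deterministic core of the perturbation bound (Lemma 4.4): if the products
`G⁻¹H` and `Ĝ⁻¹Ĥ` are far apart, then one of the factors must be perturbed. -/
theorem perturbation_bound_det
    {N : ℕ} (hN : 0 < N)
    (G H Ghat Hhat : Matrix (Fin N) (Fin N) ℝ)
    (hG : IsUnit G) (hGhat : IsUnit Ghat) (hH : H ≠ 0)
    (ε : ℝ) (hε : 0 < ε)
    (τ : ℝ) (hτ : τ = 2 * opNorm G⁻¹ * opNorm H + ε)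
    (hfar : ε < opNorm (G⁻¹ * H - Ghat⁻¹ * Hhat)) :
    (ε / τ) * opNorm H < opNorm (H - Hhat) ∨
    (ε / τ) * (opNorm G⁻¹)⁻¹ < opNorm (G - Ghat) :=
  perturbation_bound_det_general G H Ghat Hhat hG hGhat hH ε hε τ hτ hfar
end
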